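/- For integers n ≥ 1 define ψ_n(p) = 2^{1−n} ∑_{k=0}^n C(n,k) (k/n)^{1/p} − 2^{1/p} for p ≥ 1, and let ψ(p) = 2^{1−1/p} − 2^{1/p}. Then: (1) for every p ≥ 1, ψ_n(p) → ψ(p) as n → ∞; (2) for every p > 1 and every positive integer n, ψ_n(p) < ψ_{n+1}(p); (3) for each n, ψ_n is strictly increasing on [1, ∞); (4) for every positive integer n, lim_{p → ∞} ψ_n(p) = 1 − 2^{1−n}. -/

import Mathlib

/-- `ψ_n(p) = 2^{1−n} ∑_{k=0}^n C(n,k) (k/n)^{1/p} − 2^{1/p}`. -/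
noncomputable def psiN (n : ℕ) (p : ℝ) : ℝ :=
  (2 : ℝ) ^ ((1 : ℝ) - (n : ℝ)) *
      ∑ k ∈ Finset.range (n + 1), (n.choose k : ℝ) * ((k : ℝ) / (n : ℝ)) ^ (1 / p)
    - (2 : ℝ) ^ (1 / p)

/-- `ψ(p) = 2^{1−1/p} − 2^{1/p}`. -/
noncomputable def psiInf (p : ℝ) : ℝ :=
  (2 : ℝ) ^ (1 - 1 / p) - (2 : ℝ) ^ (1 / p)

/-!
Write `ψ_n(p) = 2^{1-n} S_n(f) - 2^{1/p}` with `S_n(f) = ∑ C(n,k) f(k/n)` and `f(t) = t^{1/p}`,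
so that `2^{-n} S_n(f) = B_n(f, 1/2)`. Then (1) is the convergence of Bernstein polynomials, and
(4) holds because `(k/n)^{1/p} → 1` for `k ≥ 1` while `0^{1/p} = 0`, leaving `2^n - 1`.
For (3), `(k/n)^{1/p}` increases and `2^{1/p}` decreases in `p`, as `k/n ≤ 1 < 2`.
For (2), `S_{n+1}(f) > 2 S_n(f)` for strictly concave `f`: by Pascal's rule
`C(n+1,j) = C(n,j-1) + C(n,j)`, and the point `j/(n+1)` is the convex combination of
`(j-1)/n` and `j/n` with exactly the weights `C(n,j-1)/C(n+1,j)` and `C(n,j)/C(n+1,j)`.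
-/

open Filter Set Topology unitInterval

noncomputable def binomialSum (f : ℝ → ℝ) (n : ℕ) : ℝ :=
  ∑ k ∈ Finset.range (n + 1), (n.choose k : ℝ) * f (k / n)

lemma binomialSum_mono {f g : ℝ → ℝ} (h : ∀ x ∈ Icc (0 : ℝ) 1, f x ≤ g x) (n : ℕ) :
    binomialSum f n ≤ binomialSum g n := by
  refine Finset.sum_le_sum fun k hk => mul_le_mul_of_nonneg_left ?_ (by positivity)
  refine h _ ⟨by positivity, div_le_one_of_le₀ ?_ (by positivity)⟩
  exact_mod_cast Finset.mem_range_succ_iff.1 hk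

lemma tendsto_binomialSum_div_two_pow {f : ℝ → ℝ} (hf : ContinuousOn f (Icc 0 1)) :
    Tendsto (fun n => binomialSum f n / 2 ^ n) atTop (𝓝 (f (1 / 2))) := by
  let F : C(I, ℝ) := ⟨(Icc 0 1).domRestrict f, hf.domRestrict⟩
  let half : I := ⟨1 / 2, by norm_num, by norm_num⟩
  have hbernstein : ∀ n, bernsteinApproximation n F half = binomialSum f n / 2 ^ n := by
    intro n
    rw [bernsteinApproximation.apply, binomialSum, Finset.sum_div, ← Fin.sum_univ_eq_sum_range]
    refine Finset.sum_congr rfl fun k _ => ?_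
    have hpow : (1 / 2 : ℝ) ^ (k : ℕ) * (1 / 2) ^ (n - k) = 1 / 2 ^ n := by
      rw [← pow_add, Nat.add_sub_cancel' k.is_le, one_div_pow]
    have hF : F (bernstein.z k) = f (k / n) := rfl
    have hhalf : (half : ℝ) = 1 / 2 := rfl
    rw [bernstein_apply, smul_eq_mul, hF, hhalf, show (1 : ℝ) - 1 / 2 = 1 / 2 by norm_num]
    linear_combination (n.choose k * f (k / n) : ℝ) * hpow
  exact (((continuous_eval_const half).tendsto F).comp (bernsteinApproximation_uniform F)).congr
    hbernstein

lemma tendsto_binomialSum_rpow_nhdsGT_zero (n : ℕ) :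
    Tendsto (fun c : ℝ => binomialSum (· ^ c) n) (𝓝[>] 0) (𝓝 (2 ^ n - 1)) := by
  have hdrop_zero : ∀ c ∈ Ioi (0 : ℝ), binomialSum (· ^ c) n =
      ∑ k ∈ Finset.range n, (n.choose (k + 1) : ℝ) * ((k + 1 : ℕ) / n : ℝ) ^ c := by
    intro c hc
    simp [binomialSum, Finset.sum_range_succ', Real.zero_rpow (ne_of_gt hc)]
  have hterm : ∀ k ∈ Finset.range n,
      Tendsto (fun c : ℝ => (n.choose (k + 1) : ℝ) * ((k + 1 : ℕ) / n : ℝ) ^ c) (𝓝[>] 0)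
        (𝓝 (n.choose (k + 1))) := by
    intro k hk
    have hbase : ((k + 1 : ℕ) / n : ℝ) ≠ 0 :=
      div_ne_zero (by positivity) (by have := Finset.mem_range.1 hk; norm_cast; omega)
    simpa using ((Real.continuousAt_const_rpow (b := 0) hbase).tendsto.mono_left
      nhdsWithin_le_nhds).const_mul (n.choose (k + 1) : ℝ)
  have hchoose : ∑ k ∈ Finset.range n, (n.choose (k + 1) : ℝ) = 2 ^ n - 1 := by
    have := Nat.sum_range_choose n
    rw [Finset.sum_range_succ', Nat.choose_zero_right] at this
    rw [eq_sub_iff_add_eq]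
    exact_mod_cast this
  rw [← hchoose]
  exact (tendsto_finsetSum _ hterm).congr'
    (eventually_nhdsWithin_of_forall fun c hc => (hdrop_zero c hc).symm)

lemma choose_mul_add_choose_mul_lt {f : ℝ → ℝ} (hf : StrictConcaveOn ℝ (Icc 0 1) f)
    {n i : ℕ} (hi : i < n) :
    (n.choose i : ℝ) * f (i / n) + n.choose (i + 1) * f ((i + 1 : ℕ) / n) <
      (n + 1).choose (i + 1) * f ((i + 1 : ℕ) / (n + 1 : ℕ)) := by
  set A := (n.choose i : ℝ)
  set B := (n.choose (i + 1) : ℝ)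
  set P := ((n + 1).choose (i + 1) : ℝ)
  have hA : 0 < A := by have := Nat.choose_pos hi.le; positivity
  have hB : 0 < B := by have := Nat.choose_pos hi; positivity
  have hpascal : P = A + B := by simp only [P, A, B, Nat.choose_succ_succ', Nat.cast_add]
  have hP : 0 < P := hpascal ▸ add_pos hA hB
  have habsorb : (n + 1 : ℝ) * A = P * (i + 1) := by
    simp only [A, P]
    exact_mod_cast Nat.add_one_mul_choose_eq n i
  have hn : (0 : ℝ) < n := by exact_mod_cast i.zero_le.trans_lt hi
  have hmem : ∀ j ≤ n, (j / n : ℝ) ∈ Icc (0 : ℝ) 1 := fun j hj =>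
    ⟨by positivity, div_le_one_of_le₀ (by exact_mod_cast hj) hn.le⟩
  have hcomb :
      A / P * (i / n) + B / P * ((i + 1 : ℕ) / n) = ((i + 1 : ℕ) / (n + 1 : ℕ) : ℝ) := by
    push_cast
    field_simp
    linear_combination (-((i : ℝ) + 1) * ((n : ℝ) + 1)) * hpascal - habsorb
  have hne : (i / n : ℝ) ≠ (i + 1 : ℕ) / n :=
    (div_lt_div_of_pos_right (by push_cast; linarith) hn).ne
  have hconc := hf.2 (hmem i hi.le) (hmem (i + 1) hi) hne (div_pos hA hP) (div_pos hB hP)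
    (by rw [← add_div, ← hpascal, div_self hP.ne'])
  simp only [smul_eq_mul, hcomb] at hconc
  calc A * f (i / n) + B * f ((i + 1 : ℕ) / n)
      = P * (A / P * f (i / n) + B / P * f ((i + 1 : ℕ) / n)) := by field_simp
    _ < P * f ((i + 1 : ℕ) / (n + 1 : ℕ)) := mul_lt_mul_of_pos_left hconc hP

lemma two_mul_binomialSum_lt {f : ℝ → ℝ} (hf : StrictConcaveOn ℝ (Icc 0 1) f) {n : ℕ}
    (hn : 1 ≤ n) : 2 * binomialSum f n < binomialSum f (n + 1) := by
  set g : ℕ → ℝ := fun k => n.choose k * f (k / n)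
  set h : ℕ → ℝ := fun k => (n + 1).choose k * f (k / (n + 1 : ℕ))
  have hshift : binomialSum f n = ∑ i ∈ Finset.range n, g (i + 1) + g 0 :=
    Finset.sum_range_succ' g n
  have hlast : binomialSum f n = ∑ i ∈ Finset.range n, g i + g n := Finset.sum_range_succ g n
  have hsucc : binomialSum f (n + 1) = ∑ i ∈ Finset.range n, h (i + 1) + h 0 + h (n + 1) := by
    rw [binomialSum, Finset.sum_range_succ, Finset.sum_range_succ']
  have hfirst : g 0 = h 0 := by simp [g, h]
  have hend : g n = h (n + 1) := by
    have hn0 : (n : ℝ) ≠ 0 := by positivity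
    have hn1 : (n : ℝ) + 1 ≠ 0 := by positivity
    simp [g, h, hn0, hn1]
  have hmiddle :
      ∑ i ∈ Finset.range n, (g i + g (i + 1)) < ∑ i ∈ Finset.range n, h (i + 1) :=
    Finset.sum_lt_sum_of_nonempty (Finset.nonempty_range_iff.2 (by omega)) fun i hi =>
      choose_mul_add_choose_mul_lt hf (Finset.mem_range.1 hi)
  rw [Finset.sum_add_distrib] at hmiddle
  linarith

lemma two_rpow_one_sub_natCast (n : ℕ) : (2 : ℝ) ^ ((1 : ℝ) - n) = 2 / 2 ^ n := by
  rw [Real.rpow_sub two_pos, Real.rpow_one, Real.rpow_natCast]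

lemma psiN_eq_binomialSum (n : ℕ) (p : ℝ) :
    psiN n p = 2 ^ ((1 : ℝ) - n) * binomialSum (· ^ (1 / p)) n - 2 ^ (1 / p) := rfl

lemma tendsto_psiN_psiInf {p : ℝ} (hp : 0 ≤ p) :
    Tendsto (fun n => psiN n p) atTop (𝓝 (psiInf p)) := by
  have hcont : ContinuousOn (· ^ (1 / p)) (Icc (0 : ℝ) 1) :=
    (Real.continuous_rpow_const (one_div_nonneg.2 hp)).continuousOn
  have hlim :=
    ((tendsto_binomialSum_div_two_pow hcont).const_mul 2).sub_const ((2 : ℝ) ^ (1 / p))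
  have hvalue : 2 * (1 / 2 : ℝ) ^ (1 / p) - 2 ^ (1 / p) = psiInf p := by
    rw [psiInf, Real.rpow_sub two_pos, Real.rpow_one, Real.div_rpow zero_le_one zero_le_two,
      Real.one_rpow]
    ring
  refine hvalue ▸ hlim.congr fun n => ?_
  rw [psiN_eq_binomialSum, two_rpow_one_sub_natCast]
  ring

lemma psiN_lt_psiN_succ {p : ℝ} (hp : 1 < p) {n : ℕ} (hn : 1 ≤ n) :
    psiN n p < psiN (n + 1) p := by
  have hconc : StrictConcaveOn ℝ (Icc (0 : ℝ) 1) (· ^ (1 / p)) :=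
    (Real.strictConcaveOn_rpow (by positivity) ((div_lt_one (by positivity)).2 hp)).subset
      Icc_subset_Ici_self (convex_Icc 0 1)
  have hsum := two_mul_binomialSum_lt hconc hn
  rw [psiN_eq_binomialSum, psiN_eq_binomialSum, two_rpow_one_sub_natCast,
    two_rpow_one_sub_natCast, pow_succ, div_mul_eq_mul_div, div_mul_eq_mul_div,
    show ∀ x : ℝ, 2 * x / (2 ^ n * 2) = x / 2 ^ n from fun x => by field_simp]
  gcongr

lemma strictMonoOn_psiN (n : ℕ) : StrictMonoOn (psiN n) (Ioi 0) := by
  intro p hp q hq hpq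
  have hexp : 1 / q < 1 / p := one_div_lt_one_div_of_lt hp hpq
  have hsum : binomialSum (· ^ (1 / p)) n ≤ binomialSum (· ^ (1 / q)) n :=
    binomialSum_mono (fun x hx =>
      Real.rpow_le_rpow_of_exponent_ge' hx.1 hx.2 (one_div_pos.2 hq).le hexp.le) n
  have htwo : (2 : ℝ) ^ (1 / q) < 2 ^ (1 / p) := Real.rpow_lt_rpow_of_exponent_lt one_lt_two hexp
  have hscaled := mul_le_mul_of_nonneg_left hsum (by positivity : (0 : ℝ) ≤ 2 ^ ((1 : ℝ) - n))
  rw [psiN_eq_binomialSum, psiN_eq_binomialSum]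
  linarith

lemma tendsto_psiN_exponent_atTop (n : ℕ) :
    Tendsto (fun p => psiN n p) atTop (𝓝 (1 - 2 ^ ((1 : ℝ) - n))) := by
  have hexp : Tendsto (fun p : ℝ => 1 / p) atTop (𝓝[>] 0) := by
    simpa using tendsto_inv_atTop_nhdsGT_zero
  have htwo : Tendsto (fun p : ℝ => (2 : ℝ) ^ (1 / p)) atTop (𝓝 1) := by
    simpa [Function.comp_def] using
      (Real.continuousAt_const_rpow (b := 0) two_ne_zero).tendsto.comp
        (hexp.mono_right nhdsWithin_le_nhds)
  have hlim := (((tendsto_binomialSum_rpow_nhdsGT_zero n).comp hexp).const_mul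
    (2 ^ ((1 : ℝ) - n))).sub htwo
  have hvalue : 2 ^ ((1 : ℝ) - n) * (2 ^ n - 1) - 1 = 1 - (2 : ℝ) ^ ((1 : ℝ) - n) := by
    rw [two_rpow_one_sub_natCast]
    field_simp
    ring
  exact hvalue ▸ hlim

theorem stmt6 :
    (∀ p : ℝ, 1 ≤ p →
      Filter.Tendsto (fun n : ℕ => psiN n p) Filter.atTop (nhds (psiInf p))) ∧
    (∀ p : ℝ, 1 < p → ∀ n : ℕ, 1 ≤ n → psiN n p < psiN (n + 1) p) ∧
    (∀ n : ℕ, 1 ≤ n → StrictMonoOn (psiN n) (Set.Ici (1 : ℝ))) ∧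
    (∀ n : ℕ, 1 ≤ n →
      Filter.Tendsto (fun p : ℝ => psiN n p) Filter.atTop
        (nhds (1 - (2 : ℝ) ^ ((1 : ℝ) - (n : ℝ))))) :=
  ⟨fun _ hp => tendsto_psiN_psiInf (zero_le_one.trans hp),
    fun _ hp _ hn => psiN_lt_psiN_succ hp hn,
    fun n _ => (strictMonoOn_psiN n).mono (Ici_subset_Ioi.2 one_pos),
    fun n _ => tendsto_psiN_exponent_atTop n⟩
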